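/- Let p_0 ∈ (ℓ/(k+ℓ), 1) with k, ℓ ≥ 1 integers. Define h_0(r) = p_0(r^{k+ℓ} - 1) and h_1(r) = r^ℓ - 1 for r ∈ [0,1]. Then there is a unique r̂ ∈ (0,1) with h_0(r̂) = h_1(r̂); that is, the equation p_0 r^{k+ℓ} - r^ℓ + (1 - p_0) = 0 has exactly one solution r̂ in (0,1). -/

import Mathlib

/-!
Write the equation as `g r = 0` with `g r = p₀ r^{k+ℓ} - r^ℓ + (1 - p₀)`. Since
`g' r = r^{ℓ-1} (p₀ (k+ℓ) r^k - ℓ)`, the function `g` strictly decreases up to the point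
`c = (ℓ / (p₀ (k+ℓ)))^{1/k}`, which lies in `(0,1)` because `p₀ > ℓ/(k+ℓ)`, and strictly
increases after it. As `g 0 = 1 - p₀ > 0` and `g 1 = 0`, we get `g c < 0`, so `g` has exactly one
zero in `(0, c)` and none in `[c, 1)`.
-/

open Set

theorem existsUnique_zero_of_strictAntiOn_of_strictMonoOn {f : ℝ → ℝ} {a b c : ℝ}
    (hac : a ≤ c) (hcb : c < b) (hf : ContinuousOn f (Icc a c))
    (hanti : StrictAntiOn f (Icc a c)) (hmono : StrictMonoOn f (Icc c b))
    (ha : 0 < f a) (hb : f b = 0) :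
    ∃! x, x ∈ Ioo a b ∧ f x = 0 := by
  have hfc : f c < 0 := hb ▸ hmono (left_mem_Icc.2 hcb.le) (right_mem_Icc.2 hcb.le) hcb
  have lt_c : ∀ y ∈ Ioo a b, f y = 0 → y < c := by
    intro y hy hfy
    by_contra! hcy
    have := hmono ⟨hcy, hy.2.le⟩ (right_mem_Icc.2 hcb.le) hy.2
    rw [hfy, hb] at this
    exact this.false
  obtain ⟨x, hx, hfx⟩ := intermediate_value_Ioo' hac hf ⟨hfc, ha⟩
  refine ⟨x, ⟨⟨hx.1, hx.2.trans hcb⟩, hfx⟩, fun y ⟨hy, hfy⟩ => ?_⟩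
  exact hanti.injOn ⟨hy.1.le, (lt_c y hy hfy).le⟩ (Ioo_subset_Icc_self hx) (hfy.trans hfx.symm)

def crossingPoly (p : ℝ) (k l : ℕ) (x : ℝ) : ℝ :=
  p * x ^ (k + l) - x ^ l + (1 - p)

namespace crossingPoly

variable {p : ℝ} {k l : ℕ}

theorem eq_zero_iff {x : ℝ} : crossingPoly p k l x = 0 ↔ p * (x ^ (k + l) - 1) = x ^ l - 1 := by
  unfold crossingPoly
  constructor <;> intro h <;> linarith

@[fun_prop]
theorem continuous : Continuous (crossingPoly p k l) := by
  unfold crossingPoly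
  fun_prop

theorem apply_zero (hl : l ≠ 0) : crossingPoly p k l 0 = 1 - p := by
  simp [crossingPoly, hl]

theorem apply_one : crossingPoly p k l 1 = 0 := by
  simp [crossingPoly]

theorem hasDerivAt (hl : l ≠ 0) (x : ℝ) :
    HasDerivAt (crossingPoly p k l) (x ^ (l - 1) * (p * (k + l) * x ^ k - l)) x := by
  refine ((((hasDerivAt_pow (k + l) x).const_mul p).sub (hasDerivAt_pow l x)).add_const
    (1 - p)).congr_deriv ?_
  rw [show k + l - 1 = k + (l - 1) by omega, pow_add]
  push_cast [Nat.one_le_iff_ne_zero.2 hl]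
  ring

variable {c : ℝ}

theorem strictAntiOn (hk : k ≠ 0) (hl : l ≠ 0) (hp : 0 < p) (hck : p * (k + l) * c ^ k = l) :
    StrictAntiOn (crossingPoly p k l) (Icc 0 c) := by
  refine strictAntiOn_of_deriv_neg (convex_Icc 0 c) continuous.continuousOn fun x hx => ?_
  rw [interior_Icc] at hx
  rw [(hasDerivAt hl x).deriv]
  have : p * (k + l) * x ^ k < p * (k + l) * c ^ k := by gcongr; exacts [hx.1.le, hx.2]
  exact mul_neg_of_pos_of_neg (pow_pos hx.1 _) (by linarith)

theorem strictMonoOn (hk : k ≠ 0) (hl : l ≠ 0) (hp : 0 < p) (hc : 0 ≤ c)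
    (hck : p * (k + l) * c ^ k = l) :
    StrictMonoOn (crossingPoly p k l) (Ici c) := by
  refine strictMonoOn_of_deriv_pos (convex_Ici c) continuous.continuousOn fun x hx => ?_
  rw [interior_Ici] at hx
  rw [(hasDerivAt hl x).deriv]
  have : p * (k + l) * c ^ k < p * (k + l) * x ^ k := by gcongr; exact hx
  exact mul_pos (pow_pos (hc.trans_lt hx) _) (by linarith)

end crossingPoly

theorem exists_pos_lt_one_mul_pow_eq {a b : ℝ} {k : ℕ} (hk : k ≠ 0) (ha : 0 < a) (hb : 0 < b)
    (hab : a < b) : ∃ c, 0 < c ∧ c < 1 ∧ b * c ^ k = a := by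
  have hx : 0 < a / b := div_pos ha hb
  refine ⟨(a / b) ^ (k⁻¹ : ℝ), Real.rpow_pos_of_pos hx _,
    Real.rpow_lt_one hx.le ((div_lt_one hb).2 hab) (by positivity), ?_⟩
  rw [Real.rpow_inv_natCast_pow hx.le hk, mul_div_cancel₀ _ hb.ne']

/-- For `p₀ ∈ (ℓ/(k+ℓ),1)`, with `h₀(r) = p₀(r^{k+ℓ}-1)` and `h₁(r) = r^ℓ - 1`,
there is a unique `r̂ ∈ (0,1)` with `h₀(r̂) = h₁(r̂)`. -/
theorem stmt6 (p0 : ℝ) (k l : ℕ) (hk : 1 ≤ k) (hl : 1 ≤ l)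
    (hp0 : (l : ℝ) / ((k : ℝ) + l) < p0) (hp1 : p0 < 1) :
    ∃! r : ℝ, r ∈ Set.Ioo (0 : ℝ) 1 ∧ p0 * (r ^ (k + l) - 1) = r ^ l - 1 := by
  have hk0 : k ≠ 0 := Nat.one_le_iff_ne_zero.1 hk
  have hl0 : l ≠ 0 := Nat.one_le_iff_ne_zero.1 hl
  have hkl : (0 : ℝ) < k + l := by positivity
  have hp : 0 < p0 := (div_pos (by positivity) hkl).trans hp0
  obtain ⟨c, hc0, hc1, hck⟩ :=
    exists_pos_lt_one_mul_pow_eq hk0 (by positivity) (by positivity) ((div_lt_iff₀ hkl).1 hp0)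
  simp_rw [← crossingPoly.eq_zero_iff]
  refine existsUnique_zero_of_strictAntiOn_of_strictMonoOn hc0.le hc1 (by fun_prop)
    (crossingPoly.strictAntiOn hk0 hl0 hp hck)
    ((crossingPoly.strictMonoOn hk0 hl0 hp hc0.le hck).mono Icc_subset_Ici_self) ?_
    crossingPoly.apply_one
  rw [crossingPoly.apply_zero hl0]
  linarith
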